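/- Consider a sequence E(t), t = 0, 1, 2, ..., with E(0) = 0, evolving as E(t+1) = E(t) - P(t) + e(t), where 0 ≤ P(t), 0 ≤ e(t) ≤ h_max, and e(t) = 0 whenever E(t) ≥ θ, and P(t) ≤ E(t) for all t. Then 0 ≤ E(t) ≤ θ + h_max for all t. -/
import Mathlib


theorem energy_queue_bound (E P e : ℕ → ℝ) (θ hmax : ℝ)
    (hθ : 0 ≤ θ) (hmax0 : 0 ≤ hmax)
    (hE0 : E 0 = 0)
    (hdyn : ∀ t, E (t+1) = E t - P t + e t)
    (hP : ∀ t, 0 ≤ P t)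
    (he0 : ∀ t, 0 ≤ e t) (he1 : ∀ t, e t ≤ hmax)
    (hharvest : ∀ t, θ ≤ E t → e t = 0)
    (havail : ∀ t, P t ≤ E t) :
    ∀ t, 0 ≤ E t ∧ E t ≤ θ + hmax := by
  intro t
  induction t with
  | zero => simp [hE0]; linarith
  | succ n ih =>
    obtain ⟨h0, h1⟩ := ih
    constructor
    · have := havail n; have := he0 n; rw [hdyn n]; linarith
    · rw [hdyn n]
      rcases le_or_gt θ (E n) with h | h
      · have := hharvest n h; have := hP n; linarith
      · have := he1 n; have := hP n; linarith
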